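/- (Deviation between the averaged v- and x-iterates.) Let A ≥ 0, a > 0 and A' := A + a. Let x_i, v_i, x_i⁺, v_i⁺ ∈ ℝ^d for i = 1,…,n, set y_i := (A·x_i + a·v_i)/A', and write x̄ := (1/n)·∑_i x_i, v̄ := (1/n)·∑_i v_i, x̄⁺ := (1/n)·∑_i x_i⁺, v̄⁺ := (1/n)·∑_i v_i⁺. Then ‖v̄⁺ − x̄⁺‖² ≤ (A/A')·‖v̄ − x̄‖² + (4A'/a)·(1/n)·∑_{i=1}^n ‖x_i⁺ − y_i‖² + (2A'/a)·(1/n)·∑_{i=1}^n ‖v_i⁺ − v_i‖². -/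

import Mathlib

open scoped BigOperators

abbrev Vec (d : ℕ) := EuclideanSpace ℝ (Fin d)

/-!
Averaging the identity `vᵢ - yᵢ = (A/A') • (vᵢ - xᵢ)` gives
`v̄⁺ - x̄⁺ = (A/A') • (v̄ - x̄) + (mean (v⁺ - v) - mean (x⁺ - y))`.
Everything else is convexity of `‖·‖²`: the two-point inequality with weights `A/A'` and `a/A'`
splits off the first term, and Jensen's inequality bounds the squared norm of each mean by the
mean of the squared norms.
-/

theorem norm_sub_sq_le_two_mul {E : Type*} [SeminormedAddCommGroup E] (p q : E) :
    ‖p - q‖ ^ 2 ≤ 2 * ‖p‖ ^ 2 + 2 * ‖q‖ ^ 2 :=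
  calc ‖p - q‖ ^ 2 ≤ (‖p‖ + ‖q‖) ^ 2 := by gcongr; exact norm_sub_le p q
    _ ≤ 2 * ‖p‖ ^ 2 + 2 * ‖q‖ ^ 2 := by linarith [add_sq_le (a := ‖p‖) (b := ‖q‖)]

section NormSq

variable {E : Type*} [NormedAddCommGroup E] [NormedSpace ℝ E]

theorem convexOn_univ_norm_sq : ConvexOn ℝ Set.univ (fun z : E => ‖z‖ ^ 2) :=
  convexOn_univ_norm.pow (fun _ _ => norm_nonneg _) 2

theorem norm_smul_add_sq_le {c : ℝ} (hc₀ : 0 ≤ c) (hc₁ : c < 1) (u q : E) :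
    ‖c • u + q‖ ^ 2 ≤ c * ‖u‖ ^ 2 + (1 - c)⁻¹ * ‖q‖ ^ 2 := by
  have hc : 0 < 1 - c := by linarith
  have hq : q = (1 - c) • (1 - c)⁻¹ • q := by rw [smul_inv_smul₀ hc.ne']
  calc ‖c • u + q‖ ^ 2 = ‖c • u + (1 - c) • (1 - c)⁻¹ • q‖ ^ 2 := by rw [← hq]
    _ ≤ c * ‖u‖ ^ 2 + (1 - c) * ‖(1 - c)⁻¹ • q‖ ^ 2 :=
      convexOn_univ_norm_sq.2 trivial trivial hc₀ hc.le (by ring)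
    _ = c * ‖u‖ ^ 2 + (1 - c)⁻¹ * ‖q‖ ^ 2 := by
      rw [norm_smul, Real.norm_of_nonneg (inv_nonneg.2 hc.le)]
      field_simp

theorem norm_sq_average_le {ι : Type*} (s : Finset ι) (z : ι → E) :
    ‖(1 / (s.card : ℝ)) • ∑ i ∈ s, z i‖ ^ 2 ≤ (1 / (s.card : ℝ)) * ∑ i ∈ s, ‖z i‖ ^ 2 := by
  rcases s.eq_empty_or_nonempty with rfl | hs
  · simp
  have hw : ∑ _i ∈ s, 1 / (s.card : ℝ) = 1 := by
    rw [Finset.sum_const, nsmul_eq_mul]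
    field_simp [hs.card_pos.ne']
  have := convexOn_univ_norm_sq.map_sum_le (t := s) (w := fun _ => 1 / (s.card : ℝ)) (p := z)
    (fun _ _ => by positivity) hw (fun _ _ => trivial)
  simpa only [← Finset.smul_sum, ← Finset.mul_sum, smul_eq_mul] using this

end NormSq

theorem stmt_17_general (d n : ℕ)
    (A a : ℝ) (hA : 0 ≤ A) (ha : 0 < a)
    (x v xp vp y : Fin n → Vec d)
    (hy : ∀ i, y i = (A + a)⁻¹ • (A • x i + a • v i))
    (xbar vbar xbarp vbarp : Vec d)
    (hxbar : xbar = (1 / (n : ℝ)) • ∑ i, x i)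
    (hvbar : vbar = (1 / (n : ℝ)) • ∑ i, v i)
    (hxbarp : xbarp = (1 / (n : ℝ)) • ∑ i, xp i)
    (hvbarp : vbarp = (1 / (n : ℝ)) • ∑ i, vp i) :
    ‖vbarp - xbarp‖ ^ 2
      ≤ (A / (A + a)) * ‖vbar - xbar‖ ^ 2
        + (4 * (A + a) / a) * ((1 / (n : ℝ)) * ∑ i, ‖xp i - y i‖ ^ 2)
        + (2 * (A + a) / a) * ((1 / (n : ℝ)) * ∑ i, ‖vp i - v i‖ ^ 2) := by
  have hAa : 0 < A + a := by linarith
  set c := A / (A + a)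
  have hinv : (1 - c)⁻¹ = (A + a) / a := by
    rw [show 1 - c = a / (A + a) by simp only [c]; field_simp; ring, inv_div]
  have hmean (z : Fin n → Vec d) :
      ‖(1 / (n : ℝ)) • ∑ i, z i‖ ^ 2 ≤ (1 / (n : ℝ)) * ∑ i, ‖z i‖ ^ 2 := by
    simpa only [Finset.card_univ, Fintype.card_fin] using norm_sq_average_le Finset.univ z
  have hdecomp : vbarp - xbarp = c • (vbar - xbar) +
      ((1 / (n : ℝ)) • ∑ i, (vp i - v i) - (1 / (n : ℝ)) • ∑ i, (xp i - y i)) := by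
    simp only [hxbar, hvbar, hxbarp, hvbarp, hy, c, Finset.sum_sub_distrib, ← Finset.smul_sum,
      Finset.sum_add_distrib]
    match_scalars <;> field_simp <;> ring
  set q₁ := (1 / (n : ℝ)) • ∑ i, (xp i - y i)
  set q₂ := (1 / (n : ℝ)) • ∑ i, (vp i - v i)
  have hc₀ : 0 ≤ c := by positivity
  have hc₁ : c < 1 := (div_lt_one hAa).2 (by linarith)
  have hS₁ : 0 ≤ (1 / (n : ℝ)) * ∑ i, ‖xp i - y i‖ ^ 2 := by positivity
  calc ‖vbarp - xbarp‖ ^ 2 ≤ c * ‖vbar - xbar‖ ^ 2 + (1 - c)⁻¹ * ‖q₂ - q₁‖ ^ 2 := by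
        rw [hdecomp]; exact norm_smul_add_sq_le hc₀ hc₁ _ _
    _ ≤ c * ‖vbar - xbar‖ ^ 2 + (A + a) / a * (2 * ‖q₂‖ ^ 2 + 2 * ‖q₁‖ ^ 2) := by
        rw [hinv]; gcongr; exact norm_sub_sq_le_two_mul _ _
    _ ≤ c * ‖vbar - xbar‖ ^ 2 + (A + a) / a * (4 * ((1 / (n : ℝ)) * ∑ i, ‖xp i - y i‖ ^ 2)
          + 2 * ((1 / (n : ℝ)) * ∑ i, ‖vp i - v i‖ ^ 2)) := by
        gcongr c * ‖vbar - xbar‖ ^ 2 + _ * ?_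
        have hq₁ : ‖q₁‖ ^ 2 ≤ (1 / (n : ℝ)) * ∑ i, ‖xp i - y i‖ ^ 2 := hmean _
        have hq₂ : ‖q₂‖ ^ 2 ≤ (1 / (n : ℝ)) * ∑ i, ‖vp i - v i‖ ^ 2 := hmean _
        linarith
    _ = _ := by ring

/-- Deviation between the averaged v- and x-iterates. -/
theorem stmt_17 (d n : ℕ) (hn : 1 ≤ n)
    (A a : ℝ) (hA : 0 ≤ A) (ha : 0 < a)
    (x v xp vp y : Fin n → Vec d)
    (hy : ∀ i, y i = (A + a)⁻¹ • (A • x i + a • v i))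
    (xbar vbar xbarp vbarp : Vec d)
    (hxbar : xbar = (1 / (n : ℝ)) • ∑ i, x i)
    (hvbar : vbar = (1 / (n : ℝ)) • ∑ i, v i)
    (hxbarp : xbarp = (1 / (n : ℝ)) • ∑ i, xp i)
    (hvbarp : vbarp = (1 / (n : ℝ)) • ∑ i, vp i) :
    ‖vbarp - xbarp‖ ^ 2
      ≤ (A / (A + a)) * ‖vbar - xbar‖ ^ 2
        + (4 * (A + a) / a) * ((1 / (n : ℝ)) * ∑ i, ‖xp i - y i‖ ^ 2)
        + (2 * (A + a) / a) * ((1 / (n : ℝ)) * ∑ i, ‖vp i - v i‖ ^ 2) :=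
  stmt_17_general d n A a hA ha x v xp vp y hy xbar vbar xbarp vbarp hxbar hvbar hxbarp hvbarp
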